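/- Let L be a finite enumerable lattice, let u₁, u₂ ∈ L with tp(u₁) = tp(u₂), let r, l ∈ ℕ, and let μ be a partition. Then |S(u₁,r,μ)| = |S(u₂,r,μ)|, |S(u₁,r,l)| = |S(u₂,r,l)|, and |S(u₁,r)| = |S(u₂,r)|. -/

import Mathlib

/-- The height of an element: the greatest length of chains from `⊥` to `u`. -/
noncomputable def ht {L : Type*} [Preorder L] (u : L) : ℕ := (Order.height u).toNat

/-- An element `z` is a cycle if the interval `[⊥, z]` is a chain. -/
def IsCycle {L : Type*} [Lattice L] [BoundedOrder L] (z : L) : Prop :=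
  IsChain (· ≤ ·) (Set.Icc (⊥ : L) z)

/-- An element `z` is a dual cycle if the interval `[z, ⊤]` is a chain. -/
def IsDualCycle {L : Type*} [Lattice L] [BoundedOrder L] (z : L) : Prop :=
  IsChain (· ≤ ·) (Set.Icc z (⊤ : L))

/-- A lattice is semi-primary if every element is a join of cycles and a meet of
dual cycles. -/
def IsSemiPrimary (L : Type*) [Lattice L] [BoundedOrder L] : Prop :=
  ∀ u : L, (∃ s : Finset L, (∀ z ∈ s, IsCycle z) ∧ u = s.sup id) ∧
           (∃ s : Finset L, (∀ z ∈ s, IsDualCycle z) ∧ u = s.inf id)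

/-- A finite family of lattice elements is independent. -/
def IndepFun {L : Type*} [Lattice L] [BoundedOrder L] {n : ℕ} (z : Fin n → L) : Prop :=
  ∀ i, ((Finset.univ.erase i).sup z) ⊓ z i = ⊥

/-- A partition is (represented by) a multiset of positive natural numbers. -/
def IsPartition (μ : Multiset ℕ) : Prop := ∀ p ∈ μ, 0 < p

/-- The `i`-th largest part of a partition (0-indexed, 0 if out of range). -/
def partGet (μ : Multiset ℕ) (i : ℕ) : ℕ := ((μ.sort (· ≤ ·)).reverse).getD i 0

/-- Componentwise order on partitions: `μ ≤ λ` iff `μᵢ ≤ λᵢ` for all `i`. -/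
def PartLE (μ lam : Multiset ℕ) : Prop := ∀ i, partGet μ i ≤ partGet lam i

/-- For `λ = (sⁿ)` and `μ ≤ λ`, the partition `λ − μ = (s − μₙ, …, s − μ₁)`. -/
def partSub (s n : ℕ) (μ : Multiset ℕ) : Multiset ℕ :=
  Multiset.filter (fun x => 0 < x)
    (↑((List.range n).map (fun i => s - partGet μ i)) : Multiset ℕ)

/-- `u` has type `μ`: `u` is a join of independent nonzero cycles whose multiset of
heights equals `μ`. -/
def IsTypeOf {L : Type*} [Lattice L] [BoundedOrder L] (u : L) (μ : Multiset ℕ) : Prop :=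
  ∃ (n : ℕ) (z : Fin n → L), (∀ i, IsCycle (z i)) ∧ (∀ i, z i ≠ ⊥) ∧ IndepFun z ∧
    u = Finset.univ.sup z ∧ (↑(List.ofFn (fun i => ht (z i))) : Multiset ℕ) = μ

/-- The lattice metric `d(u,v) = h(u ∨ v) − h(u ∧ v)`. -/
noncomputable def dLat {L : Type*} [Lattice L] (u v : L) : ℕ := ht (u ⊔ v) - ht (u ⊓ v)

/-- The sphere of radius `r` centered at `u`. -/
def sph {L : Type*} [Lattice L] (u : L) (r : ℕ) : Set L := {v | dLat u v ≤ r}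

/-- The `t`-th layer of the sphere of radius `r` centered at `u`. -/
def sphH {L : Type*} [Lattice L] (u : L) (r t : ℕ) : Set L :=
  {v | dLat u v ≤ r ∧ ht v = t}

/-- The elements of type `μ` in the sphere of radius `r` centered at `u`. -/
def sphT {L : Type*} [Lattice L] [BoundedOrder L] (u : L) (r : ℕ) (μ : Multiset ℕ) :
    Set L := {v | dLat u v ≤ r ∧ IsTypeOf v μ}

/-- A finite semi-primary lattice is down-enumerable. -/
def DownEnum (L : Type*) [Lattice L] [BoundedOrder L] : Prop :=
  ∀ (u v : L) (φ μ : Multiset ℕ), IsTypeOf u φ → IsTypeOf v φ →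
    Nat.card {w : L // IsTypeOf w μ ∧ w ≤ u} = Nat.card {w : L // IsTypeOf w μ ∧ w ≤ v}

/-- A finite semi-primary lattice is up-enumerable. -/
def UpEnum (L : Type*) [Lattice L] [BoundedOrder L] : Prop :=
  ∀ (u v : L) (φ μ : Multiset ℕ), IsTypeOf u φ → IsTypeOf v φ →
    Nat.card {w : L // IsTypeOf w μ ∧ u ≤ w} = Nat.card {w : L // IsTypeOf w μ ∧ v ≤ w}

/-- A lattice is enumerable if it is both down- and up-enumerable. -/
def Enumerable (L : Type*) [Lattice L] [BoundedOrder L] : Prop := DownEnum L ∧ UpEnum L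

/-- `α(φ,μ)`: the number of elements of type `μ` below a (any) element of type `φ`. -/
noncomputable def alphaP (L : Type*) [Lattice L] [BoundedOrder L] (φ μ : Multiset ℕ) : ℕ :=
  sSup {n | ∃ u : L, IsTypeOf u φ ∧ n = Nat.card {w : L // IsTypeOf w μ ∧ w ≤ u}}

/-- `β(φ,μ)`: the number of elements of type `μ` above a (any) element of type `φ`. -/
noncomputable def betaP (L : Type*) [Lattice L] [BoundedOrder L] (φ μ : Multiset ℕ) : ℕ :=
  sSup {n | ∃ u : L, IsTypeOf u φ ∧ n = Nat.card {w : L // IsTypeOf w μ ∧ u ≤ w}}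

/-- `α(μ, r₁, …, rₙ)`: the number of chains `x₁ ≤ ⋯ ≤ xₙ ≤ w` with `h(xᵢ) = rᵢ`,
below a (any) element `w` of type `μ`. -/
noncomputable def alphaChain (L : Type*) [Lattice L] [BoundedOrder L] (μ : Multiset ℕ)
    {n : ℕ} (r : Fin n → ℕ) : ℕ :=
  sSup {m | ∃ w : L, IsTypeOf w μ ∧
    m = Nat.card {x : Fin n → L // (∀ i, ht (x i) = r i) ∧ Monotone x ∧ ∀ i, x i ≤ w}}

/-!
Fix a function `F` on `L` that only depends on the type. For `u` of type `φ`, the sums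
`Q(u, τ) = ∑ {F v | u ⊓ v has type τ}` determine the sphere counts, because `d(u, v)` only depends
on `h(u)`, `h(v)` and `h(u ⊓ v)`. Counting pairs `w ≤ u ⊓ v` with `w` of type `σ` in two ways gives
`∑_τ Q(u, τ) α(τ, σ) = ∑_{w ≤ u, tp w = σ} ∑_{v ≥ w} F v`, whose right side only depends on `φ` by
enumerability (downwards for `w ≤ u`, upwards for `v ≥ w`). The matrix `α(τ, σ)` is unitriangular
with respect to height, so the `Q(u, τ)` are recovered by downward induction on the height of `τ`.
That every element has a type at all is the decomposition of a semi-primary lattice into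
independent cycles: a cycle of maximal height below `u` has a complement in `[0, u]`.
-/

section Height

variable {L : Type*} [PartialOrder L] [Fintype L]

lemma height_lt_top_of_fintype (x : L) : Order.height x < ⊤ :=
  (Order.height_le fun p _ => (ENat.natCast_le_natCast.2 p.length_lt_card.le)).trans_lt
    (ENat.natCast_lt_top (Fintype.card L))

lemma coe_ht (x : L) : (ht x : ℕ∞) = Order.height x :=
  ENat.natCast_toNat (height_lt_top_of_fintype x).ne

lemma ht_mono : Monotone (ht : L → ℕ) := fun _ y h =>
  ENat.toNat_le_toNat (Order.height_mono h) (height_lt_top_of_fintype y).ne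

lemma ht_strictMono : StrictMono (ht : L → ℕ) := fun x y h => by
  have := Order.height_strictMono h (height_lt_top_of_fintype x)
  rwa [← coe_ht, ← coe_ht, ENat.natCast_lt_natCast] at this

lemma eq_of_le_of_ht_le {x y : L} (h : x ≤ y) (hxy : ht y ≤ ht x) : x = y :=
  h.eq_of_not_lt fun hlt => (ht_strictMono hlt).not_ge hxy

lemma exists_le_ht_eq {x : L} {c : ℕ} (hc : c ≤ ht x) : ∃ w ≤ x, ht w = c := by
  obtain ⟨p, hlast, hlen⟩ := Order.exists_series_of_height_eq_coe x (coe_ht x).symm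
  have hidx := Order.height_eq_index_of_length_eq_height_last (p := p) (by rw [hlast, hlen, coe_ht])
  rw [← hlast]
  refine ⟨p ⟨c, by omega⟩, p.monotone (Fin.le_last _), ?_⟩
  rw [← ENat.natCast_inj, coe_ht, hidx]

end Height

lemma ht_bot {L : Type*} [Preorder L] [OrderBot L] : ht (⊥ : L) = 0 := by
  simp [ht]

section Modular

variable {L : Type*} [Lattice L] [IsModularLattice L] [Fintype L]

lemma CovBy.ht_add_one {x y : L} (h : x ⋖ y) : ht x + 1 = ht y := by
  induction hn : ht y using Nat.strong_induction_on generalizing x y with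
  | _ n ih =>
  have hxy := ht_strictMono h.lt
  obtain ⟨z₀, hz₀y, hz₀⟩ := exists_le_ht_eq (x := y) (c := n - 1) (by omega)
  obtain ⟨z, hz₀z, hzy⟩ := exists_le_covBy_of_lt (hz₀y.lt_of_ne (by rintro rfl; omega))
  have hz : ht z = n - 1 := by
    have := ht_mono hz₀z; have := ht_strictMono hzy.lt; omega
  by_cases hxz : x = z
  · subst hxz; omega
  -- two distinct lower covers of `y` meet in a common lower cover of both
  have hsup : x ⊔ z = y := by
    refine (h.eq_or_eq le_sup_left (sup_le h.le hzy.le)).resolve_left fun hx => hxz ?_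
    exact (hzy.eq_or_eq (sup_eq_left.1 hx) h.le).resolve_right h.lt.ne
  have h₁ : x ⊓ z ⋖ z := inf_covBy_of_covBy_sup_left (hsup ▸ h)
  have h₂ : x ⊓ z ⋖ x := inf_covBy_of_covBy_sup_right (hsup ▸ hzy)
  have := ih (n - 1) (by omega) h₁ hz
  have := ht_strictMono h₂.lt
  omega

lemma ht_sup_add_ht_inf (a b : L) : ht (a ⊔ b) + ht (a ⊓ b) = ht a + ht b := by
  induction hk : ht b - ht (a ⊓ b) using Nat.strong_induction_on generalizing a with
  | _ k ih =>
  rcases (inf_le_right : a ⊓ b ≤ b).lt_or_eq with hlt | heq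
  · obtain ⟨c, hcov, hcb⟩ := exists_covBy_le_of_lt hlt
    have hac : a ⊓ c = a ⊓ b :=
      le_antisymm (inf_le_inf_left a hcb) (le_inf inf_le_left hcov.le)
    have h₁ := (covBy_sup_of_inf_covBy_right (hac ▸ hcov)).ht_add_one
    have h₂ := hcov.ht_add_one
    have hinf : (a ⊔ c) ⊓ b = c := by
      rw [sup_comm, sup_inf_assoc_of_le a hcb, sup_eq_left.2 hcov.le]
    have hsup : a ⊔ c ⊔ b = a ⊔ b := by rw [sup_assoc, sup_eq_right.2 hcb]
    have hlt : ht b - ht ((a ⊔ c) ⊓ b) < k := by have := ht_mono hcb; rw [hinf]; omega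
    have := ih _ hlt (a ⊔ c) rfl
    rw [hinf, hsup] at this
    omega
  · rw [heq, sup_eq_left.2 (heq ▸ inf_le_left)]

lemma dLat_le_iff {u v : L} {r : ℕ} : dLat u v ≤ r ↔ ht u + ht v ≤ r + 2 * ht (u ⊓ v) := by
  have := ht_sup_add_ht_inf u v
  have := ht_mono (inf_le_left : u ⊓ v ≤ u)
  rw [dLat]
  omega

end Modular

open Finset

theorem Finset.sum_eq_sum_of_card_eq_of_factorsThrough {ι C M : Type*} [AddCommMonoid M]
    {κ : ι → C} {F : ι → M} (hF : F.FactorsThrough κ) {s t : Finset ι} {c : C}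
    (hsc : ∀ i ∈ s, κ i = c) (htc : ∀ i ∈ t, κ i = c) (hst : #s = #t) :
    ∑ i ∈ s, F i = ∑ i ∈ t, F i := by
  have key : ∀ u : Finset ι, (∀ i ∈ u, κ i = c) → ∑ i ∈ u, F i = #u • Function.extend κ F 0 c :=
    fun u hu => by
      rw [← sum_const]
      exact sum_congr rfl fun i hi => by rw [← hu i hi, hF.extend_apply]
  rw [key s hsc, key t htc, hst]

section ClassCounting

open scoped Classical

variable {L C : Type*} [SemilatticeInf L] [Fintype L]

/-- An abstract form of enumerability, in which the classes `κ x` play the role of types. -/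
structure IsEnumerableClassMap (κ : L → C) : Prop where
  ht_eq : ∀ ⦃x y⦄, κ x = κ y → ht x = ht y
  card_le_eq : ∀ ⦃x y⦄, κ x = κ y → ∀ c, #{w | w ≤ x ∧ κ w = c} = #{w | w ≤ y ∧ κ w = c}
  card_ge_eq : ∀ ⦃x y⦄, κ x = κ y → ∀ c, #{w | x ≤ w ∧ κ w = c} = #{w | y ≤ w ∧ κ w = c}

lemma sum_mul_card_le_inf (κ : L → C) (F : L → ℕ) (u : L) (c : C) :
    ∑ v, F v * #{w | w ≤ u ⊓ v ∧ κ w = c} = ∑ w with w ≤ u ∧ κ w = c, ∑ v with w ≤ v, F v := by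
  calc ∑ v, F v * #{w | w ≤ u ⊓ v ∧ κ w = c}
      = ∑ v, ∑ w with w ≤ u ⊓ v ∧ κ w = c, F v := by simp only [sum_const, smul_eq_mul, mul_comm]
    _ = _ := sum_comm' fun v w => by simp only [mem_univ, mem_filter, le_inf_iff]; tauto

lemma sum_mul_card_le_inf_eq_sum_image {κ : L → C} (F : L → ℕ) (u : L) {c : C} {d : C → ℕ}
    (hd : ∀ x, d (κ x) = #{w | w ≤ x ∧ κ w = c}) :
    ∑ v, F v * #{w | w ≤ u ⊓ v ∧ κ w = c} =
      ∑ c' ∈ univ.image κ, (∑ v with κ (u ⊓ v) = c', F v) * d c' := by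
  rw [← sum_fiberwise_of_maps_to (g := fun v => κ (u ⊓ v)) (t := univ.image κ)
    fun v _ => mem_image_of_mem κ (mem_univ _)]
  refine sum_congr rfl fun c' _ => ?_
  rw [sum_mul]
  refine sum_congr rfl fun v hv => ?_
  rw [← (mem_filter.1 hv).2, hd]

namespace IsEnumerableClassMap

variable {κ : L → C}

lemma card_le_self (hκ : IsEnumerableClassMap κ) (x : L) : #{w | w ≤ x ∧ κ w = κ x} = 1 := by
  rw [card_eq_one]
  refine ⟨x, eq_singleton_iff_unique_mem.2 ⟨by simp, fun w hw => ?_⟩⟩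
  obtain ⟨hwx, hκw⟩ := (mem_filter.1 hw).2
  exact eq_of_le_of_ht_le hwx (hκ.ht_eq hκw).ge

lemma card_le_eq_zero (hκ : IsEnumerableClassMap κ) {x y : L} (hxy : ht x ≤ ht y)
    (hne : κ x ≠ κ y) : #{w | w ≤ x ∧ κ w = κ y} = 0 := by
  refine card_eq_zero.2 (filter_eq_empty_iff.2 fun w _ ⟨hwx, hκw⟩ => hne ?_)
  rwa [← eq_of_le_of_ht_le hwx ((hκ.ht_eq hκw).trans_ge hxy)]

lemma sum_ge_eq (hκ : IsEnumerableClassMap κ) {F : L → ℕ} (hF : F.FactorsThrough κ) {w₁ w₂ : L}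
    (h : κ w₁ = κ w₂) : ∑ v with w₁ ≤ v, F v = ∑ v with w₂ ≤ v, F v := by
  have hmaps : ∀ w : L, ∀ v ∈ ({v | w ≤ v} : Finset L), κ v ∈ univ.image κ :=
    fun _ v _ => mem_image_of_mem κ (mem_univ v)
  rw [← sum_fiberwise_of_maps_to (hmaps w₁), ← sum_fiberwise_of_maps_to (hmaps w₂)]
  refine sum_congr rfl fun c _ => ?_
  rw [filter_filter, filter_filter]
  exact sum_eq_sum_of_card_eq_of_factorsThrough hF (fun v hv => (mem_filter.1 hv).2.2)
    (fun v hv => (mem_filter.1 hv).2.2) (hκ.card_ge_eq h c)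

lemma sum_mul_card_le_inf_eq (hκ : IsEnumerableClassMap κ) {F : L → ℕ} (hF : F.FactorsThrough κ)
    {u₁ u₂ : L} (hu : κ u₁ = κ u₂) (c : C) :
    ∑ v, F v * #{w | w ≤ u₁ ⊓ v ∧ κ w = c} = ∑ v, F v * #{w | w ≤ u₂ ⊓ v ∧ κ w = c} := by
  rw [sum_mul_card_le_inf, sum_mul_card_le_inf]
  exact sum_eq_sum_of_card_eq_of_factorsThrough (fun _ _ h => hκ.sum_ge_eq hF h)
    (fun w hw => (mem_filter.1 hw).2.2) (fun w hw => (mem_filter.1 hw).2.2) (hκ.card_le_eq hu c)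

theorem sum_inf_eq (hκ : IsEnumerableClassMap κ) {F : L → ℕ} (hF : F.FactorsThrough κ)
    {u₁ u₂ : L} (hu : κ u₁ = κ u₂) (y : L) :
    ∑ v with κ (u₁ ⊓ v) = κ y, F v = ∑ v with κ (u₂ ⊓ v) = κ y, F v := by
  obtain ⟨d, hd⟩ : ∃ d : C → ℕ, ∀ x, d (κ x) = #{w | w ≤ x ∧ κ w = κ y} :=
    ⟨_, Function.FactorsThrough.extend_apply (fun _ _ h => hκ.card_le_eq h (κ y)) 0⟩
  have hy : κ y ∈ univ.image κ := mem_image_of_mem κ (mem_univ y)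
  have key := hκ.sum_mul_card_le_inf_eq hF hu (κ y)
  rw [sum_mul_card_le_inf_eq_sum_image F u₁ hd, sum_mul_card_le_inf_eq_sum_image F u₂ hd,
    ← add_sum_erase _ _ hy, ← add_sum_erase _ _ hy, hd, hκ.card_le_self, mul_one, mul_one] at key
  -- the other classes contribute equally: by induction if they are higher than `κ y`,
  -- and not at all otherwise
  suffices ∑ c ∈ (univ.image κ).erase (κ y), (∑ v with κ (u₁ ⊓ v) = c, F v) * d c =
      ∑ c ∈ (univ.image κ).erase (κ y), (∑ v with κ (u₂ ⊓ v) = c, F v) * d c by omega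
  refine sum_congr rfl fun c hc => ?_
  obtain ⟨hcy, hc⟩ := mem_erase.1 hc
  obtain ⟨x, -, rfl⟩ := mem_image.1 hc
  rcases lt_or_ge (ht y) (ht x) with hlt | hle
  · rw [sum_inf_eq hκ hF hu x]
  · rw [hd, hκ.card_le_eq_zero hle hcy, mul_zero, mul_zero]
termination_by (univ : Finset L).sup ht - ht y
decreasing_by have := le_sup (f := ht) (mem_univ x); omega

theorem sum_apply_inf_eq (hκ : IsEnumerableClassMap κ) {Φ : L → L → ℕ}
    (hΦ : ∀ ⦃v v' x x'⦄, κ v = κ v' → κ x = κ x' → Φ v x = Φ v' x') {u₁ u₂ : L}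
    (hu : κ u₁ = κ u₂) : ∑ v, Φ v (u₁ ⊓ v) = ∑ v, Φ v (u₂ ⊓ v) := by
  have hfib : ∀ u : L, ∑ v, Φ v (u ⊓ v) =
      ∑ c ∈ univ.image κ, ∑ v with κ (u ⊓ v) = c, Φ v (u ⊓ v) := fun u =>
    (sum_fiberwise_of_maps_to (fun v _ => mem_image_of_mem κ (mem_univ (u ⊓ v))) _).symm
  rw [hfib, hfib]
  refine sum_congr rfl fun c hc => ?_
  obtain ⟨x, -, rfl⟩ := mem_image.1 hc
  have hrep : ∀ u : L, ∑ v with κ (u ⊓ v) = κ x, Φ v (u ⊓ v) = ∑ v with κ (u ⊓ v) = κ x, Φ v x :=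
    fun u => sum_congr rfl fun v hv => hΦ rfl (mem_filter.1 hv).2
  rw [hrep, hrep]
  exact hκ.sum_inf_eq (fun v v' h => hΦ h rfl) hu x

end IsEnumerableClassMap

end ClassCounting

open scoped Classical in
theorem IsEnumerableClassMap.ncard_sphere_eq {L C : Type*} [Lattice L] [IsModularLattice L]
    [Fintype L] {κ : L → C} (hκ : IsEnumerableClassMap κ) {P : L → Prop}
    (hP : ∀ ⦃v v'⦄, κ v = κ v' → (P v ↔ P v')) {u₁ u₂ : L} (hu : κ u₁ = κ u₂) (r : ℕ) :
    {v | dLat u₁ v ≤ r ∧ P v}.ncard = {v | dLat u₂ v ≤ r ∧ P v}.ncard := by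
  have hcount : ∀ u, ht u = ht u₁ → {v | dLat u v ≤ r ∧ P v}.ncard =
      ∑ v, if ht u₁ + ht v ≤ r + 2 * ht (u ⊓ v) ∧ P v then 1 else 0 := by
    intro u hu
    rw [Set.ncard_eq_toFinset_card', Set.toFinset_ofPred, card_filter]
    simp_rw [dLat_le_iff, hu]
  rw [hcount u₁ rfl, hcount u₂ (hκ.ht_eq hu).symm]
  exact hκ.sum_apply_inf_eq (Φ := fun v x => if ht u₁ + ht v ≤ r + 2 * ht x ∧ P v then 1 else 0)
    (fun v v' x x' hv hx => by simp only [hκ.ht_eq hv, hκ.ht_eq hx, hP hv]) hu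

theorem IsChain.of_orderIso {α β : Type*} [Preorder α] [Preorder β] {s : Set α} {t : Set β}
    (hs : IsChain (· ≤ ·) s) (e : s ≃o t) : IsChain (· ≤ ·) t := fun x hx y hy _ =>
  (hs.total (e.symm ⟨x, hx⟩).2 (e.symm ⟨y, hy⟩).2).imp (e.symm.le_iff_le.1 ·) (e.symm.le_iff_le.1 ·)

lemma isCycle_bot {L : Type*} [Lattice L] [BoundedOrder L] : IsCycle (⊥ : L) := by
  simp [IsCycle, Set.Icc_self]

lemma isChain_Icc_of_forall_le {L : Type*} [Lattice L] [IsModularLattice L] [BoundedOrder L]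
    (hsp : IsSemiPrimary L) {p a u : L} (hpa : p < a) (hau : a ≤ u)
    (h : ∀ x, p < x → x ≤ u → a ≤ x) : IsChain (· ≤ ·) (Set.Icc p u) := by
  obtain ⟨s, hdual, hps⟩ := (hsp p).2
  have hpu := hpa.le.trans hau
  obtain ⟨d, hd, hdu⟩ : ∃ d ∈ s, d ⊓ u ≤ p := by
    by_contra! hcon
    refine hpa.not_ge (hps ▸ Finset.le_inf fun d hd => ?_)
    have hpdu : p < d ⊓ u := (le_inf (hps ▸ Finset.inf_le hd) hpu).lt_of_not_ge (hcon d hd)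
    exact (h _ hpdu inf_le_right).trans inf_le_left
  have hp : d ⊓ u = p := le_antisymm hdu (le_inf (hps ▸ Finset.inf_le hd) hpu)
  exact hp ▸ ((hdual d hd).mono (Set.Icc_subset_Icc_right le_top)).of_orderIso
    (infIccOrderIsoIccSup' d u).symm

lemma exists_isCycle_sup_eq {L : Type*} [Lattice L] [BoundedOrder L] (hsp : IsSemiPrimary L)
    {y c : L} (hyc : y ≤ c)
    (hch : IsChain (· ≤ ·) (Set.Icc y c)) : ∃ c₀, IsCycle c₀ ∧ c₀ ≤ c ∧ y ⊔ c₀ = c := by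
  classical
  obtain ⟨t, hcyc, hct⟩ := (hsp c).1
  have hsub : ∀ a ∈ insert ⊥ t, IsCycle a ∧ a ≤ c := by
    simp only [Finset.mem_insert, forall_eq_or_imp]
    exact ⟨⟨isCycle_bot, bot_le⟩, fun a ha => ⟨hcyc a ha, hct ▸ Finset.le_sup (f := id) ha⟩⟩
  -- the joins `y ⊔ a` lie in the chain `[y, c]`, so the largest of them is their join `c`
  have hS : IsChain (· ≤ ·) ((y ⊔ ·) '' ↑(insert ⊥ t)) := hch.mono <| by
    rintro _ ⟨a, ha, rfl⟩
    exact ⟨le_sup_left, sup_le hyc (hsub a ha).2⟩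
  have hsc : SupClosed ((y ⊔ ·) '' ↑(insert ⊥ t)) := fun a ha b hb =>
    (hS.total ha hb).elim (fun h => (sup_eq_right.2 h).symm ▸ hb)
      (fun h => (sup_eq_left.2 h).symm ▸ ha)
  obtain ⟨a, ha, hya⟩ := hsc.finsetSup_mem (Finset.insert_nonempty ⊥ t)
    fun a ha => Set.mem_image_of_mem _ ha
  refine ⟨a, (hsub a ha).1, (hsub a ha).2, hya.trans ?_⟩
  rw [show (fun a => y ⊔ a) = (fun _ => y) ⊔ id from rfl, Finset.sup_sup,
    Finset.sup_const (Finset.insert_nonempty ⊥ t), Finset.sup_insert, id, bot_sup_eq, ← hct,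
    sup_eq_right.2 hyc]

structure IsMaxCycleIn {L : Type*} [Preorder L] (p u z : L) : Prop where
  left_le : p ≤ z
  le_right : z ≤ u
  isChain : IsChain (· ≤ ·) (Set.Icc p z)
  ht_le : ∀ c, p ≤ c → c ≤ u → IsChain (· ≤ ·) (Set.Icc p c) → ht c ≤ ht z

section Finite

variable {L : Type*} [PartialOrder L] [Fintype L]

lemma exists_isMaxCycleIn {p u : L} (hpu : p ≤ u) : ∃ z, IsMaxCycleIn p u z := by
  obtain ⟨z, ⟨hpz, hzu, hch⟩, hmax⟩ := Set.Finite.exists_maximalFor ht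
    {c | p ≤ c ∧ c ≤ u ∧ IsChain (· ≤ ·) (Set.Icc p c)} (Set.toFinite _)
    ⟨p, le_rfl, hpu, by simp [Set.Icc_self]⟩
  exact ⟨z, hpz, hzu, hch, fun c h₁ h₂ h₃ => (le_total (ht c) (ht z)).elim id (hmax ⟨h₁, h₂, h₃⟩)⟩

lemma IsMaxCycleIn.lt_of_lt {p u z : L} (hz : IsMaxCycleIn p u z) (hpu : p < u) : p < z := by
  obtain ⟨q, hpq, hqu⟩ := exists_covBy_le_of_lt hpu
  refine hz.left_le.lt_of_ne ?_
  rintro rfl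
  exact (ht_strictMono hpq.lt).not_ge (hz.ht_le q hpq.le hqu (hpq.Icc_eq ▸ IsChain.pair hpq.le))

end Finite

namespace IsMaxCycleIn

variable {L : Type*} [Lattice L] [IsModularLattice L] [BoundedOrder L] [Fintype L]

lemma sup (hsp : IsSemiPrimary L) {p u z : L} (hz : IsMaxCycleIn p u z) {y : L} (hpy : p ≤ y)
    (hyu : y ≤ u) (hzy : z ⊓ y = p) : IsMaxCycleIn y u (z ⊔ y) where
  left_le := le_sup_right
  le_right := sup_le hz.le_right hyu
  isChain := (hzy ▸ hz.isChain).of_orderIso (infIccOrderIsoIccSup z y)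
  ht_le c hyc hcu hch := by
    obtain ⟨c₀, hc₀, hc₀c, rfl⟩ := exists_isCycle_sup_eq hsp hyc hch
    have h₁ := ht_sup_add_ht_inf y c₀
    have h₂ := ht_sup_add_ht_inf p c₀
    have h₃ := ht_sup_add_ht_inf z y
    rw [hzy] at h₃
    have h₄ := hz.ht_le (p ⊔ c₀) le_sup_left (sup_le (hpy.trans hyu) (hc₀c.trans hcu))
      ((hc₀.mono (Set.Icc_subset_Icc_left bot_le)).of_orderIso (infIccOrderIsoIccSup' p c₀))
    have h₅ := ht_mono (inf_le_inf_right c₀ hpy)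
    omega

lemma eq_of_forall_inf_ne (hsp : IsSemiPrimary L) {p u z : L} (hz : IsMaxCycleIn p u z)
    (hpu : p < u) (h : ∀ y, p < y → y ≤ u → z ⊓ y ≠ p) : z = u := by
  obtain ⟨a, hpa, haz⟩ := exists_covBy_le_of_lt (hz.lt_of_lt hpu)
  -- the atom `a` of the chain `[p, z]` lies below every `x ∈ (p, u]`, so `[p, u]` is a chain
  have hchu := isChain_Icc_of_forall_le hsp hpa.lt (haz.trans hz.le_right) fun x hpx hxu => by
    have hpzx : p < z ⊓ x := (le_inf hz.left_le hpx.le).lt_of_ne (h x hpx hxu).symm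
    rcases hz.isChain.total ⟨hpa.le, haz⟩ ⟨hpzx.le, inf_le_left⟩ with hle | hle
    · exact hle.trans inf_le_right
    · exact ((hpa.eq_or_eq hpzx.le hle).resolve_left hpzx.ne').ge.trans inf_le_right
  exact eq_of_le_of_ht_le hz.le_right (hz.ht_le u hpu.le le_rfl hchu)

theorem exists_inf_eq_sup_eq (hsp : IsSemiPrimary L) {p u z : L} (hz : IsMaxCycleIn p u z) :
    ∃ y, p ≤ y ∧ y ≤ u ∧ z ⊓ y = p ∧ z ⊔ y = u := by
  by_cases h : ∃ y, p < y ∧ y ≤ u ∧ z ⊓ y = p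
  · obtain ⟨y, hpy, hyu, hzy⟩ := h
    obtain ⟨y', hyy', hy'u, hinf, hsup⟩ := (hz.sup hsp hpy.le hyu hzy).exists_inf_eq_sup_eq hsp
    refine ⟨y', hpy.le.trans hyy', hy'u, le_antisymm ?_ (le_inf hz.left_le (hpy.le.trans hyy')), ?_⟩
    · calc z ⊓ y' ≤ z ⊓ ((z ⊔ y) ⊓ y') :=
            le_inf inf_le_left (le_inf (inf_le_left.trans le_sup_left) inf_le_right)
        _ = p := by rw [hinf, hzy]
    · rw [← hsup, sup_assoc, sup_eq_right.2 hyy']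
  · push Not at h
    have hzu : z = u := by
      rcases (hz.left_le.trans hz.le_right).lt_or_eq with hpu | rfl
      · exact hz.eq_of_forall_inf_ne hsp hpu h
      · exact le_antisymm hz.le_right hz.left_le
    exact ⟨p, le_rfl, hz.left_le.trans hz.le_right, inf_eq_right.2 hz.left_le,
      by rw [sup_eq_left.2 hz.left_le, hzu]⟩
termination_by ht u - ht p
decreasing_by have := ht_strictMono hpy; have := ht_mono hyu; omega

end IsMaxCycleIn

section Types

variable {L : Type*} [Lattice L] [BoundedOrder L]

lemma indepFun_iff_supIndep {n : ℕ} {z : Fin n → L} :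
    IndepFun z ↔ (Finset.univ : Finset (Fin n)).SupIndep z := by
  classical
  simp [IndepFun, Finset.supIndep_iff_disjoint_erase, disjoint_iff, inf_comm]

variable [IsModularLattice L]

lemma IsTypeOf.cons {y z : L} {μ : Multiset ℕ} (hy : IsTypeOf y μ) (hz : IsCycle z) (hz₀ : z ≠ ⊥)
    (hzy : Disjoint z y) : IsTypeOf (z ⊔ y) (ht z ::ₘ μ) := by
  obtain ⟨n, zs, hcyc, hne, hind, rfl, rfl⟩ := hy
  refine ⟨n + 1, Fin.cons z zs, Fin.cases hz hcyc, Fin.cases hz₀ hne, ?_, ?_, ?_⟩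
  · classical
    rw [indepFun_iff_supIndep, Fin.univ_succ, Finset.cons_eq_insert]
    refine Finset.SupIndep.insert ?_ ?_
    · exact Finset.supIndep_map.2 (indepFun_iff_supIndep.1 hind)
    · simpa [Finset.sup_map, Function.comp_def] using hzy
  · simp [Fin.univ_succ, Finset.sup_map, Function.comp_def]
  · simp [List.ofFn_succ]

variable [Fintype L]

lemma Finset.SupIndep.ht_sup {ι : Type*} {s : Finset ι} {f : ι → L} (hs : s.SupIndep f) :
    ht (s.sup f) = ∑ i ∈ s, ht (f i) := by
  classical
  induction s using Finset.induction_on with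
  | empty => simp [ht_bot]
  | insert j s hj ih =>
    have hdisj : f j ⊓ s.sup f = ⊥ :=
      disjoint_iff.1 (hs (Finset.subset_insert j s) (Finset.mem_insert_self j s) hj)
    have := ht_sup_add_ht_inf (f j) (s.sup f)
    rw [hdisj, ht_bot, ih (hs.subset (Finset.subset_insert j s))] at this
    rw [Finset.sup_insert, Finset.sum_insert hj]
    omega

lemma IsTypeOf.ht_eq {u : L} {μ : Multiset ℕ} (h : IsTypeOf u μ) : ht u = μ.sum := by
  obtain ⟨n, z, -, -, hind, rfl, rfl⟩ := h
  rw [(indepFun_iff_supIndep.1 hind).ht_sup]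
  simp [List.sum_ofFn]

theorem exists_isTypeOf (hsp : IsSemiPrimary L) (u : L) : ∃ μ, IsTypeOf u μ := by
  rcases eq_or_ne u ⊥ with rfl | hu
  · exact ⟨0, 0, Fin.elim0, fun i => i.elim0, fun i => i.elim0, fun i => i.elim0, by simp, rfl⟩
  obtain ⟨z, hz⟩ := exists_isMaxCycleIn (bot_le : ⊥ ≤ u)
  obtain ⟨y, -, hyu, hzy, hzyu⟩ := hz.exists_inf_eq_sup_eq hsp
  have hz₀ : ⊥ < z := hz.lt_of_lt (bot_lt_iff_ne_bot.2 hu)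
  have hy : ht y < ht u := by
    have h₁ := ht_sup_add_ht_inf z y
    have h₂ := ht_strictMono hz₀
    rw [hzy, hzyu, ht_bot] at h₁
    rw [ht_bot] at h₂
    omega
  obtain ⟨μ, hμ⟩ := exists_isTypeOf hsp y
  exact ⟨_, hzyu ▸ hμ.cons hz.isChain hz₀.ne' (disjoint_iff.2 hzy)⟩
termination_by ht u

end Types

section TypeClasses

variable {L : Type*} [Lattice L] [IsModularLattice L] [BoundedOrder L] [Fintype L]

/-- Types are not known to be unique here, so elements are classified by their sets of types. -/
def typeSet (v : L) : Set (Multiset ℕ) := {μ | IsTypeOf v μ}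

lemma IsTypeOf.of_isTypeOf (hde : DownEnum L) {v x : L} {μ μ' : Multiset ℕ} (hx : IsTypeOf x μ)
    (hv : IsTypeOf v μ) (hv' : IsTypeOf v μ') : IsTypeOf x μ' := by
  have hne : Nonempty {w : L // IsTypeOf w μ' ∧ w ≤ x} := by
    rw [← Finite.card_pos_iff, hde x v μ μ' hx hv]
    exact Finite.card_pos_iff.2 ⟨⟨v, hv', le_rfl⟩⟩
  obtain ⟨w, hw, hwx⟩ := hne.some
  rwa [← eq_of_le_of_ht_le hwx (by rw [hw.ht_eq, hx.ht_eq, ← hv.ht_eq, ← hv'.ht_eq])]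

lemma typeSet_eq_iff (hde : DownEnum L) {v v' : L} {μ : Multiset ℕ} (hv' : IsTypeOf v' μ) :
    typeSet v = typeSet v' ↔ IsTypeOf v μ :=
  ⟨fun h => show μ ∈ typeSet v from h ▸ hv', fun hv => Set.ext fun _ =>
    ⟨fun h => hv'.of_isTypeOf hde hv h, fun h => hv.of_isTypeOf hde hv' h⟩⟩

open scoped Classical in
lemma card_typeSet_eq (hsp : IsSemiPrimary L) (hde : DownEnum L) {R : L → L → Prop} {x y : L}
    (hR : ∀ μ, Nat.card {w // IsTypeOf w μ ∧ R x w} = Nat.card {w // IsTypeOf w μ ∧ R y w})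
    (S : Set (Multiset ℕ)) :
    #{w | R x w ∧ typeSet w = S} = #{w | R y w ∧ typeSet w = S} := by
  by_cases hS : ∃ w₀ : L, typeSet w₀ = S
  · obtain ⟨w₀, rfl⟩ := hS
    obtain ⟨μ, hμ⟩ := exists_isTypeOf hsp w₀
    have hcard : ∀ x, #{w | R x w ∧ typeSet w = typeSet w₀} =
        Nat.card {w // IsTypeOf w μ ∧ R x w} := fun x => by
      simp only [Nat.card_eq_fintype_card, Fintype.card_subtype, typeSet_eq_iff hde hμ, and_comm]
    rw [hcard, hcard, hR]
  · push Not at hS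
    simp [hS]

theorem isEnumerableClassMap_typeSet (hsp : IsSemiPrimary L) (hen : Enumerable L) :
    IsEnumerableClassMap (typeSet (L := L)) where
  ht_eq x y h := by
    obtain ⟨φ, hy⟩ := exists_isTypeOf hsp y
    rw [((typeSet_eq_iff hen.1 hy).1 h).ht_eq, hy.ht_eq]
  card_le_eq x y h := by
    obtain ⟨φ, hy⟩ := exists_isTypeOf hsp y
    exact card_typeSet_eq hsp hen.1 (R := fun x w => w ≤ x)
      fun μ => hen.1 x y φ μ ((typeSet_eq_iff hen.1 hy).1 h) hy
  card_ge_eq x y h := by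
    obtain ⟨φ, hy⟩ := exists_isTypeOf hsp y
    exact card_typeSet_eq hsp hen.1 (R := fun x w => x ≤ w)
      fun μ => hen.2 x y φ μ ((typeSet_eq_iff hen.1 hy).1 h) hy

end TypeClasses

theorem stmt9_general {L : Type*} [Lattice L] [IsModularLattice L] [BoundedOrder L] [Fintype L]
    (hsp : IsSemiPrimary L) (hen : Enumerable L)
    (u₁ u₂ : L) (φ : Multiset ℕ) (h₁ : IsTypeOf u₁ φ) (h₂ : IsTypeOf u₂ φ)
    (r l : ℕ) (μ : Multiset ℕ) :
    (sphT u₁ r μ).ncard = (sphT u₂ r μ).ncard ∧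
    (sphH u₁ r l).ncard = (sphH u₂ r l).ncard ∧
    (sph u₁ r).ncard = (sph u₂ r).ncard := by
  have hκ := isEnumerableClassMap_typeSet hsp hen
  have hu : typeSet u₁ = typeSet u₂ := (typeSet_eq_iff hen.1 h₂).2 h₁
  refine ⟨hκ.ncard_sphere_eq (fun _ _ h => Set.ext_iff.1 h μ) hu r,
    hκ.ncard_sphere_eq (fun _ _ h => by rw [hκ.ht_eq h]) hu r, ?_⟩
  have := hκ.ncard_sphere_eq (P := fun _ => True) (fun _ _ _ => Iff.rfl) hu r
  simp only [and_true] at this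
  exact this

/-- In a finite enumerable lattice, spheres (and their layers by height
or by type) centered at elements of the same type have the same cardinality. -/
theorem stmt9 {L : Type*} [Lattice L] [IsModularLattice L] [BoundedOrder L] [Fintype L]
    (hsp : IsSemiPrimary L) (hen : Enumerable L)
    (u₁ u₂ : L) (φ : Multiset ℕ) (h₁ : IsTypeOf u₁ φ) (h₂ : IsTypeOf u₂ φ)
    (r l : ℕ) (μ : Multiset ℕ) (hμ : IsPartition μ) :
    (sphT u₁ r μ).ncard = (sphT u₂ r μ).ncard ∧
    (sphH u₁ r l).ncard = (sphH u₂ r l).ncard ∧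
    (sph u₁ r).ncard = (sph u₂ r).ncard :=
  stmt9_general hsp hen u₁ u₂ φ h₁ h₂ r l μ
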